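/- arXiv:2101.03888 — 4 statements merged into one kernel-verified Lean document; each statement's English description precedes it below -/
import Mathlib

section
/- With W_i as the mixture of a point mass at τ (weight 1−p(τ;i)) and a shifted exponential with rate (1−γ)/γ starting at τ (weight p(τ;i)), one has E[p(W_i;0)] = γ − e^{−τ/γ}γ(γ + p(τ;i) − 2)/(γ−2). -/
open Real MeasureTheory

lemma int_exp_aux (a : ℝ) {b : ℝ} (hb : 0 < b) :
    (∫ x in Set.Ioi a, Real.exp (-(b * x))) = Real.exp (-(b * a)) / b := by
  have := MeasureTheory.integral_comp_mul_left_Ioi (fun x => Real.exp (-x)) a hb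
  simpa [integral_exp_neg_Ioi, integral_exp_Iic, smul_eq_mul, div_eq_inv_mul] using this

/-- Expected belief at switching: `E[p(W_i;0)] = (1-p(τ;i))p(τ;0) +
p(τ;i)∫_τ^∞ p(t;0)·((1-γ)/γ)e^{-((1-γ)/γ)(t-τ)} dt` has the closed form
`γ - e^{-τ/γ}γ(γ + p(τ;i) - 2)/(γ-2)`. -/
theorem stmt8 (γ τ : ℝ) (hγ : γ ∈ Set.Ioo (0:ℝ) 1) (hτ : 0 < τ)
    (p : ℝ → Fin 2 → ℝ)
    (hp0 : ∀ t, p t 0 = γ * (1 - Real.exp (-t/γ)))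
    (hp1 : ∀ t, p t 1 = γ + (1 - γ) * Real.exp (-t/γ)) :
    ∀ i : Fin 2,
      (1 - p τ i) * p τ 0 +
        p τ i * (∫ t in Set.Ioi τ, p t 0 * ((1 - γ)/γ * Real.exp (-((1 - γ)/γ) * (t - τ))))
      = γ - Real.exp (-τ/γ) * γ * (γ + p τ i - 2) / (γ - 2) := by
  obtain ⟨hγ0, hγ1⟩ := hγ
  have h2γ : (2:ℝ) - γ ≠ 0 := by intro h; linarith
  have h2γ' : γ - 2 ≠ 0 := by intro h; linarith
  set lam : ℝ := (1 - γ)/γ with hlam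
  set mu : ℝ := (2 - γ)/γ with hmu
  have hlam_pos : 0 < lam := div_pos (by linarith) hγ0
  have hmu_pos : 0 < mu := div_pos (by linarith) hγ0
  have key : (∫ t in Set.Ioi τ, p t 0 * (lam * Real.exp (-lam * (t - τ))))
      = γ * (1 - lam / mu * Real.exp (-τ/γ)) := by
    have hfun : ∀ t : ℝ, p t 0 * (lam * Real.exp (-lam * (t - τ)))
        = (γ * lam * Real.exp (lam * τ)) * Real.exp (-(lam * t))
          - (γ * lam * Real.exp (lam * τ)) * Real.exp (-(mu * t)) := by
      intro t
      have h1 : Real.exp (-lam * (t - τ)) = Real.exp (lam * τ) * Real.exp (-(lam * t)) := by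
        rw [← Real.exp_add]; ring_nf
      have h2 : Real.exp (-t/γ) * Real.exp (-(lam * t)) = Real.exp (-(mu * t)) := by
        rw [← Real.exp_add]
        congr 1
        field_simp [hmu, hlam]
        rw [hlam, hmu]; field_simp; ring
      rw [hp0, h1]
      linear_combination (-(γ * lam * Real.exp (lam * τ))) * h2
    rw [MeasureTheory.setIntegral_congr_fun measurableSet_Ioi (fun t _ => hfun t)]
    rw [MeasureTheory.integral_sub, MeasureTheory.integral_const_mul,
      MeasureTheory.integral_const_mul, int_exp_aux τ hlam_pos, int_exp_aux τ hmu_pos]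
    · have e1 : Real.exp (lam * τ) * Real.exp (-(lam * τ)) = 1 := by
        rw [← Real.exp_add]; simp
      have e2 : Real.exp (lam * τ) * Real.exp (-(mu * τ)) = Real.exp (-τ/γ) := by
        rw [← Real.exp_add]; congr 1; rw [hlam, hmu]; field_simp; ring
      have v1 : γ * lam * Real.exp (lam * τ) * (Real.exp (-(lam * τ)) / lam) = γ := by
        rw [show γ * lam * Real.exp (lam * τ) * (Real.exp (-(lam * τ)) / lam) = γ * (Real.exp (lam * τ) * Real.exp (-(lam * τ))) * (lam / lam) by ring, e1, div_self hlam_pos.ne']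
        ring
      have v2 : γ * lam * Real.exp (lam * τ) * (Real.exp (-(mu * τ)) / mu)
          = γ * lam / mu * Real.exp (-τ/γ) := by
        rw [show γ * lam * Real.exp (lam * τ) * (Real.exp (-(mu * τ)) / mu) = γ * lam / mu * (Real.exp (lam * τ) * Real.exp (-(mu * τ))) by ring, e2]
      rw [v1, v2]
      ring
    · simpa [neg_mul] using
        ((exp_neg_integrableOn_Ioi τ hlam_pos).const_mul (γ * lam * Real.exp (lam * τ)))
    · simpa [neg_mul] using
        ((exp_neg_integrableOn_Ioi τ hmu_pos).const_mul (γ * lam * Real.exp (lam * τ)))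
  intro i
  rw [key, hp0 τ]
  field_simp [hlam, hmu, hγ0.ne', h2γ, h2γ']
  ring
end

section
/- For the geometric-type sum E[W] = E[W_0] + E[I_0]/(1−E[I_1])·E[W_1], with E[W_i]=τ+p(τ;i)γ/(1−γ) and E[I_i]=γ−e^{−τ/γ}γ(γ+p(τ;i)−2)/(γ−2), one obtains the closed form E[W] = (e^{2τ/γ}(γ³−(τ+2)γ²+3τγ−2τ) − γ³−(τ−2)γ²+τγ) / ((γ−1)²(e^{2τ/γ}(γ−2)−2e^{τ/γ}γ+γ)). -/
open Real

set_option maxHeartbeats 1000000 in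
/-- Closed form for the expected cycle length
`E[W] = E[W₀] + E[I₀]/(1-E[I₁])·E[W₁]`. -/
theorem stmt9 (γ τ : ℝ) (hγ : γ ∈ Set.Ioo (0:ℝ) 1) (hτ : 0 < τ)
    (p0 p1 EW0 EW1 EI0 EI1 : ℝ)
    (hp0 : p0 = γ * (1 - Real.exp (-τ/γ)))
    (hp1 : p1 = γ + (1 - γ) * Real.exp (-τ/γ))
    (hEW0 : EW0 = τ + p0 * γ / (1 - γ))
    (hEW1 : EW1 = τ + p1 * γ / (1 - γ))
    (hEI0 : EI0 = γ - Real.exp (-τ/γ) * γ * (γ + p0 - 2) / (γ - 2))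
    (hEI1 : EI1 = γ - Real.exp (-τ/γ) * γ * (γ + p1 - 2) / (γ - 2)) :
    EW0 + EI0 / (1 - EI1) * EW1 =
      (Real.exp (2*τ/γ) * (γ^3 - (τ + 2)*γ^2 + 3*τ*γ - 2*τ) - γ^3 - (τ - 2)*γ^2 + τ*γ)
      / ((γ - 1)^2 * (Real.exp (2*τ/γ) * (γ - 2) - 2 * Real.exp (τ/γ) * γ + γ)) := by
  obtain ⟨hγ0, hγ1⟩ := hγ
  have hx : 0 < τ / γ := div_pos hτ hγ0
  have hE1 : 1 < Real.exp (τ/γ) := by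
    rw [show (1:ℝ) = Real.exp 0 by simp]
    exact Real.exp_lt_exp.mpr hx
  have hneg : Real.exp (-τ/γ) = (Real.exp (τ/γ))⁻¹ := by
    rw [neg_div, Real.exp_neg]
  have h2 : Real.exp (2*τ/γ) = (Real.exp (τ/γ))^2 := by
    rw [← Real.exp_nat_mul]
    ring_nf
  set E := Real.exp (τ/γ) with hEdef
  have hE0 : 0 < E := lt_trans one_pos hE1
  have hEne : E ≠ 0 := ne_of_gt hE0
  have he1 : E⁻¹ < 1 := inv_lt_one_of_one_lt₀ hE1
  have he0 : 0 < E⁻¹ := inv_pos.mpr hE0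
  have hγ2 : γ - 2 < 0 := by linarith
  have hγ2ne : γ - 2 ≠ 0 := ne_of_lt hγ2
  have h1γ : (1:ℝ) - γ ≠ 0 := by linarith
  -- EI1 < γ
  have hEI1lt : EI1 < γ := by
    rw [hEI1, hneg, hp1, hneg]
    have hfac : 0 < (1 - γ) * (2 - E⁻¹) := mul_pos (by linarith) (by linarith)
    have hnum : E⁻¹ * γ * (γ + (γ + (1 - γ) * E⁻¹) - 2) < 0 := by
      nlinarith [mul_pos (mul_pos he0 hγ0) hfac]
    have : 0 < E⁻¹ * γ * (γ + (γ + (1 - γ) * E⁻¹) - 2) / (γ - 2) :=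
      div_pos_of_neg_of_neg hnum hγ2
    linarith
  have hden : (1:ℝ) - EI1 ≠ 0 := by
    have : 0 < 1 - EI1 := by linarith
    exact ne_of_gt this
  have hden2 : E^2 * (γ - 2) - 2 * E * γ + γ ≠ 0 := by
    nlinarith [sq_nonneg (E - 1), sq_nonneg E]
  have hγ1ne : γ - 1 ≠ 0 := by linarith
  have hRden : (γ - 1)^2 * (E^2 * (γ - 2) - 2 * E * γ + γ) ≠ 0 :=
    mul_ne_zero (pow_ne_zero 2 hγ1ne) hden2
  rw [h2]
  rw [div_mul_eq_mul_div, add_div' _ _ _ hden, div_eq_div_iff hden hRden]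
  subst hp0 hp1 hEW0 hEW1 hEI0 hEI1
  rw [hneg]
  field_simp
  ring
end

section
/- At c = γ², the call-gapping reward satisfies g(τ) = γ − 2e^{τ/γ}(γ−1)²γ²/A₃(γ,τ) < γ for every finite τ > 0, where A₃(γ,τ) = γ³+(τ−2)γ²−τγ − e^{2τ/γ}(γ³−(τ+2)γ²+3τγ−2τ). -/
open Real

/-- At `c = γ²`, the call-gapping reward satisfies
`g(τ) = γ - 2e^{τ/γ}(γ-1)²γ²/A₃(γ,τ) < γ` for every finite `τ > 0`. -/
theorem stmt12 (γ : ℝ) (hγ : γ ∈ Set.Ioo (0:ℝ) 1)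
    (A1 A2 A3 : ℝ → ℝ → ℝ) (c : ℝ) (g : ℝ → ℝ)
    (hA1 : ∀ γ' τ, A1 γ' τ = Real.exp (2*τ/γ') * ((τ - 1)*γ'^3 - (3*τ - 2)*γ'^2 + 2*τ*γ')
        - 2 * Real.exp (τ/γ') * γ'^2 * (1 - γ')^2 + 2*γ'^4 + (τ - 3)*γ'^3 - τ*γ'^2)
    (hA2 : ∀ γ' τ, A2 γ' τ = (γ' - 1) * (Real.exp (2*τ/γ') * (γ' - 2) + γ'))
    (hA3 : ∀ γ' τ, A3 γ' τ = γ'^3 + (τ - 2)*γ'^2 - τ*γ'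
        - Real.exp (2*τ/γ') * (γ'^3 - (τ + 2)*γ'^2 + 3*τ*γ' - 2*τ))
    (hc : c = γ^2)
    (hg : ∀ τ, g τ = (A1 γ τ - c * A2 γ τ) / A3 γ τ) :
    ∀ τ > (0:ℝ),
      g τ = γ - 2 * Real.exp (τ/γ) * (γ - 1)^2 * γ^2 / A3 γ τ ∧ g τ < γ := by
  obtain ⟨hγ0, hγ1⟩ := hγ
  intro τ hτ
  have he2 : Real.exp (2*τ/γ) = Real.exp (τ/γ) ^ 2 := by
    rw [sq, ← Real.exp_add]
    ring_nf
  have he1pos : 0 < Real.exp (τ/γ) := Real.exp_pos _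
  -- positivity of A3
  have hle : 2*τ/γ + 1 ≤ Real.exp (2*τ/γ) := Real.add_one_le_exp _
  have hdiv : 2*τ/γ * γ = 2*τ := by field_simp
  have hfac : (0:ℝ) < (2-γ)*(γ^2+τ*(1-γ)) :=
    mul_pos (by linarith) (add_pos (pow_pos hγ0 2) (mul_pos hτ (by linarith)))
  have hA3pos : 0 < A3 γ τ := by
    rw [hA3]
    nlinarith [mul_pos hτ (by nlinarith : (0:ℝ) < (γ-1)^2),
      mul_pos hτ (sub_pos.mpr hγ1), mul_pos hγ0 hτ, sq_nonneg γ,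
      mul_le_mul_of_nonneg_right hle hfac.le,
      mul_pos (mul_pos hτ hτ) (sub_pos.mpr hγ1)]
  have hA3ne : A3 γ τ ≠ 0 := ne_of_gt hA3pos
  have heq : g τ = γ - 2 * Real.exp (τ/γ) * (γ - 1)^2 * γ^2 / A3 γ τ := by
    rw [hg, hA1, hA2, hc, eq_sub_iff_add_eq, ← add_div, div_eq_iff hA3ne, hA3, he2]
    ring
  refine ⟨heq, ?_⟩
  rw [heq]
  have hpos : 0 < 2 * Real.exp (τ/γ) * (γ - 1)^2 * γ^2 / A3 γ τ := by
    apply div_pos _ hA3pos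
    have : (0:ℝ) < (γ-1)^2 := by nlinarith
    positivity
  linarith
end

section
/- For the two-channel partial observation reward g(τ) = (A₁(γ,τ)−c·A₂(γ,τ))/A₃(γ,τ): the limit as τ→0 with c=0 equals 1−(1−γ)² = 2γ−γ², and the limit as τ→∞ of A₁(γ,τ)/A₃(γ,τ) equals γ while A₂(γ,τ)/A₃(γ,τ) → 0. -/
open Real Filter

/-- Extreme values of the two-channel call-gapping reward: with `c = 0`,
`g(τ) = A₁/A₃ → 1-(1-γ)² = 2γ-γ²` as `τ → 0⁺`, while as `τ → ∞`,
`A₁/A₃ → γ` and `A₂/A₃ → 0`. -/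
theorem stmt17 (γ : ℝ) (hγ : γ ∈ Set.Ioo (0:ℝ) 1)
    (A1 A2 A3 : ℝ → ℝ)
    (hA1 : ∀ τ, A1 τ = Real.exp (2*τ/γ) * ((τ - 1)*γ^3 - (3*τ - 2)*γ^2 + 2*τ*γ)
        - 2 * Real.exp (τ/γ) * γ^2 * (1 - γ)^2 + 2*γ^4 + (τ - 3)*γ^3 - τ*γ^2)
    (hA2 : ∀ τ, A2 τ = (γ - 1) * (Real.exp (2*τ/γ) * (γ - 2) + γ))
    (hA3 : ∀ τ, A3 τ = γ^3 + (τ - 2)*γ^2 - τ*γ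
        - Real.exp (2*τ/γ) * (γ^3 - (τ + 2)*γ^2 + 3*τ*γ - 2*τ)) :
    Tendsto (fun τ => A1 τ / A3 τ) (nhdsWithin 0 (Set.Ioi 0)) (nhds (1 - (1 - γ)^2)) ∧
    (1 - (1 - γ)^2 = 2*γ - γ^2) ∧
    Tendsto (fun τ => A1 τ / A3 τ) atTop (nhds γ) ∧
    Tendsto (fun τ => A2 τ / A3 τ) atTop (nhds 0) := by
  obtain ⟨hγ0, hγ1⟩ := hγ
  have hγne : γ ≠ 0 := ne_of_gt hγ0
  -- values at 0
  have hA10 : A1 0 = 0 := by rw [hA1]; norm_num [Real.exp_zero]; ring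
  have hA30 : A3 0 = 0 := by rw [hA3]; norm_num [Real.exp_zero]
  -- derivatives at 0
  have hexp2 : HasDerivAt (fun τ : ℝ => Real.exp (2*τ/γ)) (2/γ) 0 := by
    have h : HasDerivAt (fun τ : ℝ => 2*τ/γ) (2/γ) 0 := by
      simpa using ((hasDerivAt_id (0:ℝ)).const_mul 2).div_const γ
    simpa using h.exp
  have hexp1 : HasDerivAt (fun τ : ℝ => Real.exp (τ/γ)) (1/γ) 0 := by
    have h : HasDerivAt (fun τ : ℝ => τ/γ) (1/γ) 0 := by
      simpa using (hasDerivAt_id (0:ℝ)).div_const γ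
    simpa using h.exp
  have hP : HasDerivAt (fun τ : ℝ => (τ - 1)*γ^3 - (3*τ - 2)*γ^2 + 2*τ*γ)
      (γ^3 - 3*γ^2 + 2*γ) 0 := by
    have h1 := ((hasDerivAt_id (0:ℝ)).sub_const 1).mul_const (γ^3)
    have h2 := (((hasDerivAt_id (0:ℝ)).const_mul 3).sub_const 2).mul_const (γ^2)
    have h3 := ((hasDerivAt_id (0:ℝ)).const_mul 2).mul_const γ
    have H := (h1.sub h2).add h3
    refine H.congr_deriv ?_
    ring
  have hS : HasDerivAt (fun τ : ℝ => γ^3 - (τ + 2)*γ^2 + 3*τ*γ - 2*τ)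
      (-γ^2 + 3*γ - 2) 0 := by
    have h1 := (((hasDerivAt_id (0:ℝ)).add_const 2).mul_const (γ^2)).const_sub (γ^3)
    have h2 := ((hasDerivAt_id (0:ℝ)).const_mul 3).mul_const γ
    have h3 := (hasDerivAt_id (0:ℝ)).const_mul 2
    have H := (h1.add h2).sub h3
    refine H.congr_deriv ?_
    ring
  have hD1 : HasDerivAt A1 (4*γ - 2*γ^2) 0 := by
    have hfun : A1 = fun τ => Real.exp (2*τ/γ) * ((τ - 1)*γ^3 - (3*τ - 2)*γ^2 + 2*τ*γ)
        - 2 * Real.exp (τ/γ) * γ^2 * (1 - γ)^2 + 2*γ^4 + (τ - 3)*γ^3 - τ*γ^2 := funext hA1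
    rw [hfun]
    have h1 := hexp2.mul hP
    have h2 := ((hexp1.const_mul 2).mul_const (γ^2)).mul_const ((1-γ)^2)
    have h3 := ((hasDerivAt_id (0:ℝ)).sub_const 3).mul_const (γ^3)
    have h4 := (hasDerivAt_id (0:ℝ)).mul_const (γ^2)
    have H := (((h1.sub h2).add_const (2*γ^4)).add h3).sub h4
    refine H.congr_deriv ?_
    simp only [id_eq, Real.exp_zero, mul_zero, zero_div, zero_mul, zero_sub, zero_add]
    field_simp
    ring
  have hD3 : HasDerivAt A3 2 0 := by
    have hfun : A3 = fun τ => γ^3 + (τ - 2)*γ^2 - τ*γ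
        - Real.exp (2*τ/γ) * (γ^3 - (τ + 2)*γ^2 + 3*τ*γ - 2*τ) := funext hA3
    rw [hfun]
    have h1 := (((hasDerivAt_id (0:ℝ)).sub_const 2).mul_const (γ^2)).const_add (γ^3)
    have h2 := (hasDerivAt_id (0:ℝ)).mul_const γ
    have h3 := hexp2.mul hS
    have H := (h1.sub h2).sub h3
    refine H.congr_deriv ?_
    simp only [id_eq, Real.exp_zero, mul_zero, zero_div, zero_mul, zero_sub, zero_add]
    field_simp
    ring
  -- limit at 0+
  have hs1 : Tendsto (fun τ => A1 τ / τ) (nhdsWithin 0 {(0:ℝ)}ᶜ) (nhds (4*γ - 2*γ^2)) := by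
    have h := hasDerivAt_iff_tendsto_slope.mp hD1
    refine h.congr fun τ => ?_
    simp [slope_def_field, hA10]
  have hs3 : Tendsto (fun τ => A3 τ / τ) (nhdsWithin 0 {(0:ℝ)}ᶜ) (nhds 2) := by
    have h := hasDerivAt_iff_tendsto_slope.mp hD3
    refine h.congr fun τ => ?_
    simp [slope_def_field, hA30]
  have hlim0 : Tendsto (fun τ => A1 τ / A3 τ) (nhdsWithin 0 (Set.Ioi 0))
      (nhds (1 - (1 - γ)^2)) := by
    have hd := hs1.div hs3 (by norm_num)
    have hd' := hd.mono_left
      (nhdsWithin_mono 0 (fun x (hx : x ∈ Set.Ioi (0:ℝ)) => ne_of_gt hx))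
    have heq : ∀ τ ∈ Set.Ioi (0:ℝ), (A1 τ / τ) / (A3 τ / τ) = A1 τ / A3 τ := by
      intro τ hτ
      rw [div_div_div_comm, div_self (ne_of_gt hτ), div_one]
    have := hd'.congr' (by filter_upwards [self_mem_nhdsWithin] using heq)
    convert this using 2
    ring
  -- atTop limits
  have hexpTop : Tendsto (fun τ : ℝ => Real.exp (2*τ/γ)) atTop atTop := by
    apply Real.tendsto_exp_atTop.comp
    have h : (fun τ : ℝ => 2*τ/γ) = fun τ => (2/γ)*τ := by funext τ; ring
    rw [h]
    exact Tendsto.const_mul_atTop (by positivity) tendsto_id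
  have hexp1Top : Tendsto (fun τ : ℝ => Real.exp (τ/γ)) atTop atTop := by
    apply Real.tendsto_exp_atTop.comp
    have h : (fun τ : ℝ => τ/γ) = fun τ => (1/γ)*τ := by funext τ; ring
    rw [h]
    exact Tendsto.const_mul_atTop (by positivity) tendsto_id
  have hT : Tendsto (fun τ : ℝ => τ * Real.exp (2*τ/γ)) atTop atTop :=
    tendsto_id.atTop_mul_atTop₀ hexpTop
  have hT1 : Tendsto (fun τ : ℝ => τ * Real.exp (τ/γ)) atTop atTop :=
    tendsto_id.atTop_mul_atTop₀ hexp1Top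
  have hinvt : Tendsto (fun τ : ℝ => τ⁻¹) atTop (nhds 0) := tendsto_inv_atTop_zero
  have hinvE : Tendsto (fun τ : ℝ => (Real.exp (2*τ/γ))⁻¹) atTop (nhds 0) :=
    hexpTop.inv_tendsto_atTop
  have hinvT : Tendsto (fun τ : ℝ => (τ * Real.exp (2*τ/γ))⁻¹) atTop (nhds 0) :=
    hT.inv_tendsto_atTop
  have hinvT1 : Tendsto (fun τ : ℝ => (τ * Real.exp (τ/γ))⁻¹) atTop (nhds 0) :=
    hT1.inv_tendsto_atTop
  have hEE : ∀ τ : ℝ, Real.exp (2*τ/γ) = Real.exp (τ/γ)^2 := by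
    intro τ
    rw [sq, ← Real.exp_add]
    ring_nf
  have hB1 : Tendsto (fun τ => A1 τ / (τ * Real.exp (2*τ/γ))) atTop
      (nhds (γ^3 - 3*γ^2 + 2*γ)) := by
    have hlim : Tendsto (fun τ : ℝ => (γ^3 - 3*γ^2 + 2*γ) + (-γ^3 + 2*γ^2)*τ⁻¹
        - 2*γ^2*(1-γ)^2*(τ * Real.exp (τ/γ))⁻¹ + (γ^3 - γ^2)*(Real.exp (2*τ/γ))⁻¹
        + (2*γ^4 - 3*γ^3)*(τ * Real.exp (2*τ/γ))⁻¹) atTop (nhds (γ^3 - 3*γ^2 + 2*γ)) := by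
      have hc0 : Tendsto (fun _ : ℝ => (γ^3 - 3*γ^2 + 2*γ)) atTop
          (nhds (γ^3 - 3*γ^2 + 2*γ)) := tendsto_const_nhds
      have := (((hc0.add (hinvt.const_mul (-γ^3 + 2*γ^2))).sub
        (hinvT1.const_mul (2*γ^2*(1-γ)^2))).add (hinvE.const_mul (γ^3 - γ^2))).add
        (hinvT.const_mul (2*γ^4 - 3*γ^3))
      simpa using this
    refine hlim.congr' ?_
    filter_upwards [eventually_gt_atTop (0:ℝ)] with τ hτ
    rw [hA1, hEE τ]
    have h1 : τ ≠ 0 := ne_of_gt hτ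
    have h2 : Real.exp (τ/γ) ≠ 0 := Real.exp_ne_zero _
    field_simp
    ring
  have hB3 : Tendsto (fun τ => A3 τ / (τ * Real.exp (2*τ/γ))) atTop
      (nhds (γ^2 - 3*γ + 2)) := by
    have hlim : Tendsto (fun τ : ℝ => (γ^2 - 3*γ + 2) + (γ^2 - γ)*(Real.exp (2*τ/γ))⁻¹
        + (γ^3 - 2*γ^2)*(τ * Real.exp (2*τ/γ))⁻¹ - (γ^3 - 2*γ^2)*τ⁻¹) atTop
        (nhds (γ^2 - 3*γ + 2)) := by
      have hc0 : Tendsto (fun _ : ℝ => (γ^2 - 3*γ + 2)) atTop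
          (nhds (γ^2 - 3*γ + 2)) := tendsto_const_nhds
      have := ((hc0.add (hinvE.const_mul (γ^2 - γ))).add
        (hinvT.const_mul (γ^3 - 2*γ^2))).sub (hinvt.const_mul (γ^3 - 2*γ^2))
      simpa using this
    refine hlim.congr' ?_
    filter_upwards [eventually_gt_atTop (0:ℝ)] with τ hτ
    rw [hA3, hEE τ]
    have h1 : τ ≠ 0 := ne_of_gt hτ
    have h2 : Real.exp (τ/γ) ≠ 0 := Real.exp_ne_zero _
    field_simp
    ring
  have hB2 : Tendsto (fun τ => A2 τ / (τ * Real.exp (2*τ/γ))) atTop (nhds 0) := by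
    have hlim : Tendsto (fun τ : ℝ => (γ-1)*(γ-2)*τ⁻¹
        + (γ-1)*γ*(τ * Real.exp (2*τ/γ))⁻¹) atTop (nhds 0) := by
      have := (hinvt.const_mul ((γ-1)*(γ-2))).add (hinvT.const_mul ((γ-1)*γ))
      simpa using this
    refine hlim.congr' ?_
    filter_upwards [eventually_gt_atTop (0:ℝ)] with τ hτ
    rw [hA2]
    have h1 : τ ≠ 0 := ne_of_gt hτ
    have h2 : Real.exp (2*τ/γ) ≠ 0 := Real.exp_ne_zero _
    field_simp
  have hc : γ^2 - 3*γ + 2 ≠ 0 := by nlinarith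
  have heqT : ∀ᶠ τ : ℝ in atTop, ∀ B : ℝ → ℝ,
      (B τ / (τ * Real.exp (2*τ/γ))) / (A3 τ / (τ * Real.exp (2*τ/γ))) = B τ / A3 τ := by
    filter_upwards [eventually_gt_atTop (0:ℝ)] with τ hτ B
    have hTne : τ * Real.exp (2*τ/γ) ≠ 0 :=
      mul_ne_zero (ne_of_gt hτ) (Real.exp_ne_zero _)
    rw [div_div_div_comm, div_self hTne, div_one]
  have hlim1 : Tendsto (fun τ => A1 τ / A3 τ) atTop (nhds γ) := by
    have hd := hB1.div hB3 hc
    have hval : (γ^3 - 3*γ^2 + 2*γ) / (γ^2 - 3*γ + 2) = γ := by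
      rw [div_eq_iff hc]
      ring
    rw [hval] at hd
    exact hd.congr' (heqT.mono fun τ h => h A1)
  have hlim2 : Tendsto (fun τ => A2 τ / A3 τ) atTop (nhds 0) := by
    have hd := hB2.div hB3 hc
    rw [zero_div] at hd
    exact hd.congr' (heqT.mono fun τ h => h A2)
  exact ⟨hlim0, by ring, hlim1, hlim2⟩
end
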